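/- arXiv:0710.4046 — 4 statements merged into one kernel-verified Lean document; each statement's English description precedes it below -/
import Mathlib

section
/- Let X be a complex random variable with finitely many values, zero mean, and E[|X|^2] = 1. Write X = X_r + i X_i with X_r, X_i real. Then the quantity c2 = -(E[X_r^2]^2 + E[X_i^2]^2 + 2 E[X_r X_i]^2) satisfies -1 ≤ c2 ≤ -1/2, with c2 = -1/2 attained if and only if E[X_r X_i] = 0 and E[X_r^2] = E[X_i^2] = 1/2. -/
/-!
The real and imaginary parts of `X` have the second-moment matrix `[[Er, Eri], [Eri, Ei]]`, which is
positive semidefinite with trace `E[|X|²] = 1`, and `-c₂` is its squared Frobenius norm. Since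
`Er + Ei = 1`, that norm is `1/2 + (Er - Ei)²/2 + 2 Eri²`, which is at least `1/2` with equality
exactly at `Er = Ei = 1/2`, `Eri = 0`; and it is at most `(Er + Ei)² = 1` because the
Cauchy–Schwarz inequality gives `Eri² ≤ Er Ei`.
-/

open Finset

theorem Finset.sq_sum_mul_mul_le_sum_mul_sq_mul_sum_mul_sq {ι R : Type*} [CommSemiring R]
    [LinearOrder R] [IsStrictOrderedRing R] [ExistsAddOfLE R] (s : Finset ι) {p : ι → R}
    (hp : ∀ i ∈ s, 0 ≤ p i) (f g : ι → R) :
    (∑ i ∈ s, p i * (f i * g i)) ^ 2 ≤ (∑ i ∈ s, p i * f i ^ 2) * ∑ i ∈ s, p i * g i ^ 2 :=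
  sum_sq_le_sum_mul_sum_of_sq_le_mul s (fun i hi ↦ mul_nonneg (hp i hi) (sq_nonneg _))
    (fun i hi ↦ mul_nonneg (hp i hi) (sq_nonneg _)) (fun _ _ ↦ le_of_eq (by ring))

theorem Finset.sum_mul_norm_sq_eq_sum_mul_re_sq_add_sum_mul_im_sq {ι : Type*} (s : Finset ι)
    (p : ι → ℝ) (x : ι → ℂ) :
    ∑ i ∈ s, p i * ‖x i‖ ^ 2 = ∑ i ∈ s, p i * (x i).re ^ 2 + ∑ i ∈ s, p i * (x i).im ^ 2 := by
  rw [← sum_add_distrib]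
  refine sum_congr rfl fun i _ ↦ ?_
  rw [Complex.sq_norm, Complex.normSq_apply]
  ring

section TraceOne

variable {a b c : ℝ}

theorem sq_add_sq_add_two_mul_sq_of_add_eq_one (hab : a + b = 1) :
    a ^ 2 + b ^ 2 + 2 * c ^ 2 = 1 / 2 + (a - b) ^ 2 / 2 + 2 * c ^ 2 := by
  have hb : b = 1 - a := by linarith
  subst hb
  ring

theorem one_half_le_sq_add_sq_add_two_mul_sq (hab : a + b = 1) :
    1 / 2 ≤ a ^ 2 + b ^ 2 + 2 * c ^ 2 := by
  rw [sq_add_sq_add_two_mul_sq_of_add_eq_one hab]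
  linarith [sq_nonneg (a - b), sq_nonneg c]

theorem sq_add_sq_add_two_mul_sq_le_one (hab : a + b = 1) (hc : c ^ 2 ≤ a * b) :
    a ^ 2 + b ^ 2 + 2 * c ^ 2 ≤ 1 := by
  nlinarith

theorem sq_add_sq_add_two_mul_sq_eq_one_half_iff (hab : a + b = 1) :
    a ^ 2 + b ^ 2 + 2 * c ^ 2 = 1 / 2 ↔ c = 0 ∧ a = 1 / 2 ∧ b = 1 / 2 := by
  rw [sq_add_sq_add_two_mul_sq_of_add_eq_one hab]
  constructor
  · intro h
    have hc : c ^ 2 = 0 := by linarith [sq_nonneg (a - b), sq_nonneg c]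
    have hdiff : (a - b) ^ 2 = 0 := by linarith [sq_nonneg (a - b), sq_nonneg c]
    have hba : a = b := sub_eq_zero.mp (pow_eq_zero_iff two_ne_zero |>.mp hdiff)
    exact ⟨pow_eq_zero_iff two_ne_zero |>.mp hc, by linarith, by linarith⟩
  · rintro ⟨rfl, rfl, rfl⟩
    norm_num

end TraceOne

theorem c2_bounds_general {ι : Type*} [Fintype ι] (p : ι → ℝ) (x : ι → ℂ)
    (hp : ∀ i, 0 ≤ p i)
    (henergy : ∑ i, p i * ‖x i‖ ^ 2 = 1) :
    let Er : ℝ := ∑ i, p i * (x i).re ^ 2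
    let Ei : ℝ := ∑ i, p i * (x i).im ^ 2
    let Eri : ℝ := ∑ i, p i * ((x i).re * (x i).im)
    let c2 : ℝ := -(Er ^ 2 + Ei ^ 2 + 2 * Eri ^ 2)
    (-1 ≤ c2 ∧ c2 ≤ -(1 / 2)) ∧
    (c2 = -(1 / 2) ↔ (Eri = 0 ∧ Er = 1 / 2 ∧ Ei = 1 / 2)) := by
  intro Er Ei Eri c2
  have htrace : Er + Ei = 1 :=
    (sum_mul_norm_sq_eq_sum_mul_re_sq_add_sum_mul_im_sq univ p x).symm.trans henergy
  have hcs : Eri ^ 2 ≤ Er * Ei :=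
    sq_sum_mul_mul_le_sum_mul_sq_mul_sum_mul_sq univ (fun i _ ↦ hp i) _ _
  refine ⟨⟨neg_le_neg (sq_add_sq_add_two_mul_sq_le_one htrace hcs),
    neg_le_neg (one_half_le_sq_add_sq_add_two_mul_sq htrace)⟩, ?_⟩
  rw [← sq_add_sq_add_two_mul_sq_eq_one_half_iff htrace]
  exact neg_inj

/-- For a zero-mean, unit-energy finite complex constellation, the second-order capacity
coefficient `c₂ = -(E[Xr²]² + E[Xi²]² + 2 E[Xr Xi]²)` satisfies `-1 ≤ c₂ ≤ -1/2`, with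
equality `c₂ = -1/2` iff the real and imaginary parts are uncorrelated with equal energy. -/
theorem c2_bounds {ι : Type*} [Fintype ι] (p : ι → ℝ) (x : ι → ℂ)
    (hp : ∀ i, 0 ≤ p i) (hsum : ∑ i, p i = 1)
    (hmean : ∑ i, (p i : ℂ) * x i = 0)
    (henergy : ∑ i, p i * ‖x i‖ ^ 2 = 1) :
    let Er : ℝ := ∑ i, p i * (x i).re ^ 2
    let Ei : ℝ := ∑ i, p i * (x i).im ^ 2
    let Eri : ℝ := ∑ i, p i * ((x i).re * (x i).im)
    let c2 : ℝ := -(Er ^ 2 + Ei ^ 2 + 2 * Eri ^ 2)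
    (-1 ≤ c2 ∧ c2 ≤ -(1 / 2)) ∧
    (c2 = -(1 / 2) ↔ (Eri = 0 ∧ Er = 1 / 2 ∧ Ei = 1 / 2)) :=
  c2_bounds_general p x hp henergy
end

section
/- Let c1 > 0 and c2 be real, and suppose C(s) = c1·s + c2·s^2 + o(s^2) as s → 0⁺ with C(s) > 0 for small s > 0. Define E(s) = s / C(s) (the energy per nat). Then E(s) = 1/c1 - (c2/c1^3)·C(s) + o(C(s)) as s → 0⁺, and consequently, when c2 ≠ 0, C(s) = -(c1^3/c2)·(E(s) - 1/c1) + o(E(s) - 1/c1) as s → 0⁺. -/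
open Filter Topology Asymptotics

/-- Linearization of capacity versus energy per nat: if `C(s) = c₁ s + c₂ s² + o(s²)` as
`s → 0⁺` with `c₁ > 0` and `C(s) > 0` for small `s > 0`, then the energy per nat
`E(s) = s / C(s)` satisfies `E(s) = 1/c₁ - (c₂/c₁³) C(s) + o(C(s))`, and (for `c₂ ≠ 0`)
`C(s) = -(c₁³/c₂)(E(s) - 1/c₁) + o(E(s) - 1/c₁)` as `s → 0⁺`. -/
theorem capacity_energy_linearization (c1 c2 : ℝ) (hc1 : 0 < c1) (C : ℝ → ℝ)
    (hC : (fun s => C s - (c1 * s + c2 * s ^ 2)) =o[𝓝[>] (0 : ℝ)] fun s => s ^ 2)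
    (hpos : ∀ᶠ s in 𝓝[>] (0 : ℝ), 0 < C s) :
    ((fun s => s / C s - (1 / c1 - (c2 / c1 ^ 3) * C s)) =o[𝓝[>] (0 : ℝ)] C) ∧
    (c2 ≠ 0 →
      (fun s => C s - (-(c1 ^ 3 / c2) * (s / C s - 1 / c1)))
        =o[𝓝[>] (0 : ℝ)] fun s => s / C s - 1 / c1) := by
  set l : Filter ℝ := 𝓝[>] (0 : ℝ) with hl
  have hc1' : c1 ≠ 0 := hc1.ne'
  have htend : Tendsto (fun s : ℝ => s) l (𝓝 0) := tendsto_id.mono_left nhdsWithin_le_nhds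
  -- s = o(1)
  have hso1 : (fun s : ℝ => s) =o[l] (fun _ => (1:ℝ)) := isLittleO_one_iff ℝ |>.mpr htend
  -- s^2 = o(s)
  have hso : (fun s : ℝ => s ^ 2) =o[l] (fun s => s) := by
    have := hso1.mul_isBigO (isBigO_refl (fun s : ℝ => s) l)
    simpa [pow_two] using this
  -- C tends to 0
  have hCtend : Tendsto C l (𝓝 0) := by
    have h1 : Tendsto (fun s => C s - (c1 * s + c2 * s ^ 2)) l (𝓝 0) := by
      have := hC.trans_isBigO ((htend.pow 2 : Tendsto (fun s : ℝ => s ^ 2) l (𝓝 (0^2))).congr (by norm_num) |>.isBigO_one ℝ)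
      exact (isLittleO_one_iff ℝ).mp this
    have h2 : Tendsto (fun s : ℝ => c1 * s + c2 * s ^ 2) l (𝓝 0) := by
      have : Tendsto (fun s : ℝ => c1 * s + c2 * s ^ 2) (𝓝 0) (𝓝 (c1 * 0 + c2 * 0 ^ 2)) :=
        (Continuous.tendsto (by continuity) 0)
      simpa using this.mono_left nhdsWithin_le_nhds
    have := h1.add h2
    simpa using this
  -- d := C - c1 s  is O(s^2)
  have hd : (fun s => C s - c1 * s) =O[l] (fun s => s ^ 2) := by
    have h1 : (fun s : ℝ => c2 * s ^ 2) =O[l] (fun s => s ^ 2) :=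
      (isBigO_refl _ _).const_mul_left c2
    have := hC.isBigO.add h1
    refine this.congr_left fun s => by ring
  -- d = o(s)
  have hdo : (fun s => C s - c1 * s) =o[l] (fun s => s) := hd.trans_isLittleO hso
  -- C ~ c1 s
  have hequiv : C ~[l] (fun s => c1 * s) := by
    have : (fun s => C s - c1 * s) =o[l] (fun s => c1 * s) := hdo.const_mul_right hc1'
    exact this
  -- s = O(C)
  have hid : (fun s : ℝ => s) =O[l] C := by
    have h1 : (fun s : ℝ => s) =O[l] (fun s => c1 * s) := isBigO_self_const_mul (c := c1) hc1' _ l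
    exact h1.trans hequiv.symm.isBigO
  -- N := c1^3 s - c1^2 C + c2 C^2 is o(s^2)
  have hN : (fun s => c1 ^ 3 * s - c1 ^ 2 * C s + c2 * C s ^ 2) =o[l] (fun s => s ^ 2) := by
    have h1 : (fun s => -c1 ^ 2 * (C s - (c1 * s + c2 * s ^ 2))) =o[l] (fun s => s ^ 2) :=
      hC.const_mul_left _
    have hc1s : Tendsto (fun s => C s + c1 * s) l (𝓝 0) := by
      have := hCtend.add (htend.const_mul c1)
      simpa using this
    have h2 : (fun s => c2 * ((C s - c1 * s) * (C s + c1 * s))) =o[l] (fun s => s ^ 2) := by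
      have := hd.mul_isLittleO ((isLittleO_one_iff ℝ).mpr hc1s)
      have h3 : (fun s => (C s - c1 * s) * (C s + c1 * s)) =o[l] (fun s => s ^ 2) := by
        refine this.congr_right fun s => by ring
      exact h3.const_mul_left c2
    have := h1.add h2
    refine this.congr_left fun s => by ring
  -- N = o(C * C)
  have hs2C : (fun s : ℝ => s ^ 2) =O[l] (fun s => C s * C s) := by
    simpa [pow_two] using hid.mul hid
  have hN2 : (fun s => c1 ^ 3 * s - c1 ^ 2 * C s + c2 * C s ^ 2) =o[l] (fun s => C s * C s) :=
    hN.trans_isBigO hs2C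
  have hinv : (fun s => (c1 ^ 3 * C s)⁻¹) =O[l] (fun s => (C s)⁻¹) := by
    refine IsBigO.of_bound ((c1 ^ 3)⁻¹) (Eventually.of_forall fun s => ?_)
    have heq : ‖(c1 ^ 3 * C s)⁻¹‖ = (c1 ^ 3)⁻¹ * ‖(C s)⁻¹‖ := by
      rw [mul_inv, norm_mul]
      congr 1
      rw [Real.norm_eq_abs, abs_inv, abs_of_pos (by positivity)]
    exact heq.le
  have hmain := hN2.mul_isBigO hinv
  -- part 1
  have part1 : (fun s => s / C s - (1 / c1 - (c2 / c1 ^ 3) * C s)) =o[l] C := by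
    refine hmain.congr' ?_ ?_
    · filter_upwards [hpos] with s hCs
      have hCne : C s ≠ 0 := hCs.ne'
      field_simp
      ring
    · filter_upwards [hpos] with s hCs
      have hCne : C s ≠ 0 := hCs.ne'
      field_simp
  refine ⟨part1, ?_⟩
  intro h2
  have hcne : -(c2 / c1 ^ 3) ≠ 0 := neg_ne_zero.mpr (div_ne_zero h2 (by positivity))
  have hconst : C =O[l] (fun s => -(c2 / c1 ^ 3) * C s) := isBigO_self_const_mul hcne C l
  have hequiv2 : (fun s => s / C s - 1 / c1) ~[l] (fun s => -(c2 / c1 ^ 3) * C s) := by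
    show (fun s => (s / C s - 1 / c1) - -(c2 / c1 ^ 3) * C s) =o[l] _
    refine (part1.trans_isBigO hconst).congr_left fun s => by ring
  have hCO : C =O[l] (fun s => s / C s - 1 / c1) := hconst.trans hequiv2.symm.isBigO
  have := (part1.const_mul_left (c1 ^ 3 / c2)).trans_isBigO hCO
  refine this.congr_left fun s => ?_
  have e1 : c1 ^ 3 / c2 * (c2 / c1 ^ 3) = 1 := by field_simp
  have : c1 ^ 3 / c2 * (s / C s - (1 / c1 - c2 / c1 ^ 3 * C s))
      = c1 ^ 3 / c2 * (s / C s - 1 / c1) + (c1 ^ 3 / c2 * (c2 / c1 ^ 3)) * C s := by ring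
  rw [this, e1]
  ring
end

section
/- Fix reals c11 > 0, c21, c12 > 0, c22, and ΔW ≠ 0. Define, for small s > 0, ΔP(s) as the root of (c22·s)·(ΔP)^2 + c12·ΔW·ΔP - (c11 + c21·s)·ΔW = 0 that tends to c11/c12 as s → 0 (the root given by the + branch of the quadratic formula when c22 < 0). Then ΔP(s) = c11/c12 + (c21/c12 - c22·c11^2/(c12^3·ΔW))·s + o(s) as s → 0⁺. -/
open Filter Topology Asymptotics

/-!
Dividing the quadratic by `c₁₂ ΔW` gives the fixed-point form
`ΔP = c₁₁/c₁₂ + (c₂₁/c₁₂) s - c₂₂ s ΔP² / (c₁₂ ΔW)`. Replacing `ΔP²` by its limit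
`(c₁₁/c₁₂)²` produces the claimed linear term, and the error is `s` times
`ΔP² - (c₁₁/c₁₂)²`, which tends to `0`.
-/

theorem Asymptotics.isLittleO_mul_of_tendsto_zero {α 𝕜 : Type*} [NormedField 𝕜]
    {l : Filter α} {f g : α → 𝕜} (hf : Tendsto f l (𝓝 0)) :
    (fun x => f x * g x) =o[l] g := by
  simpa only [one_mul] using ((isLittleO_one_iff 𝕜).2 hf).mul_isBigO (isBigO_refl g l)

theorem quadratic_root_sub_first_order {c11 c21 c12 c22 ΔW s x : ℝ}
    (hc12 : c12 ≠ 0) (hΔW : ΔW ≠ 0)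
    (hx : (c22 * s) * x ^ 2 + c12 * ΔW * x - (c11 + c21 * s) * ΔW = 0) :
    x - (c11 / c12 + (c21 / c12 - c22 * c11 ^ 2 / (c12 ^ 3 * ΔW)) * s)
      = -(c22 / (c12 * ΔW)) * (x ^ 2 - (c11 / c12) ^ 2) * s := by
  field_simp
  linear_combination c12 ^ 2 * hx

theorem tradeoff_power_expansion_general (c11 c21 c12 c22 ΔW : ℝ)
    (hc12 : 0 < c12) (hΔW : ΔW ≠ 0) (ΔP : ℝ → ℝ)
    (hroot : ∀ᶠ s in 𝓝[>] (0 : ℝ),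
      (c22 * s) * (ΔP s) ^ 2 + c12 * ΔW * ΔP s - (c11 + c21 * s) * ΔW = 0)
    (hlim : Tendsto ΔP (𝓝[>] (0 : ℝ)) (𝓝 (c11 / c12))) :
    (fun s => ΔP s - (c11 / c12 + (c21 / c12 - c22 * c11 ^ 2 / (c12 ^ 3 * ΔW)) * s))
      =o[𝓝[>] (0 : ℝ)] fun s => s := by
  have hcoeff : Tendsto (fun s => -(c22 / (c12 * ΔW)) * (ΔP s ^ 2 - (c11 / c12) ^ 2))
      (𝓝[>] (0 : ℝ)) (𝓝 0) := by
    convert ((hlim.pow 2).sub_const ((c11 / c12) ^ 2)).const_mul (-(c22 / (c12 * ΔW))) using 2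
    ring
  refine (isLittleO_mul_of_tendsto_zero hcoeff).congr' ?_ EventuallyEq.rfl
  filter_upwards [hroot] with s hs
  exact (quadratic_root_sub_first_order hc12.ne' hΔW hs).symm

/-- First-order expansion of the power ratio in the power–bandwidth trade-off: if
`ΔP(s)` is a root of `(c₂₂ s)·ΔP² + c₁₂·ΔW·ΔP - (c₁₁ + c₂₁ s)·ΔW = 0` tending to
`c₁₁/c₁₂` as `s → 0⁺`, then
`ΔP(s) = c₁₁/c₁₂ + (c₂₁/c₁₂ - c₂₂·c₁₁²/(c₁₂³·ΔW))·s + o(s)`. -/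
theorem tradeoff_power_expansion (c11 c21 c12 c22 ΔW : ℝ)
    (hc11 : 0 < c11) (hc12 : 0 < c12) (hΔW : ΔW ≠ 0) (ΔP : ℝ → ℝ)
    (hroot : ∀ᶠ s in 𝓝[>] (0 : ℝ),
      (c22 * s) * (ΔP s) ^ 2 + c12 * ΔW * ΔP s - (c11 + c21 * s) * ΔW = 0)
    (hlim : Tendsto ΔP (𝓝[>] (0 : ℝ)) (𝓝 (c11 / c12))) :
    (fun s => ΔP s - (c11 / c12 + (c21 / c12 - c22 * c11 ^ 2 / (c12 ^ 3 * ΔW)) * s))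
      =o[𝓝[>] (0 : ℝ)] fun s => s :=
  tradeoff_power_expansion_general c11 c21 c12 c22 ΔW hc12 hΔW ΔP hroot hlim
end

section
/- Consider QPSK X = {(±1 ± i)/√2} with the anti-Gray labeling of the paper, in which X_0^1 = {(1+i)/√2, (-1-i)/√2} and X_0^2 = {(1+i)/√2, (-1+i)/√2}, so that the level sets of bit 1 each have mean zero. For this anti-Gray mapping the BICM first-order coefficient is c1 = 1/2, and hence E_b/N_0|_lim = 2 log 2 ≈ 1.386. -/
/-- For anti-Gray labeled QPSK, where the first bit's level sets are the antipodal pairs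
`{(1+i)/√2, (-1-i)/√2}` and `{(1-i)/√2, (-1+i)/√2}` (zero mean) and the second bit splits
by the sign of the imaginary part, the BICM first-order coefficient
`c₁ = Σᵢ (1/2) Σ_b |μ₁(X_b^i)|²` equals `1/2`, hence `(log 2)/c₁ = 2 log 2`. -/
theorem qpsk_antigray_c1 :
    let s : ℂ := (Real.sqrt 2 : ℝ)
    let μ1 : Finset ℂ → ℂ := fun S => (∑ x ∈ S, x) / S.card
    let X01 : Finset ℂ := {(1 + Complex.I) / s, (-1 - Complex.I) / s}
    let X11 : Finset ℂ := {(1 - Complex.I) / s, (-1 + Complex.I) / s}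
    let X02 : Finset ℂ := {(1 + Complex.I) / s, (-1 + Complex.I) / s}
    let X12 : Finset ℂ := {(1 - Complex.I) / s, (-1 - Complex.I) / s}
    let c1 : ℝ := (1 / 2) * (‖μ1 X01‖ ^ 2 + ‖μ1 X11‖ ^ 2) +
                  (1 / 2) * (‖μ1 X02‖ ^ 2 + ‖μ1 X12‖ ^ 2)
    c1 = 1 / 2 ∧ Real.log 2 / c1 = 2 * Real.log 2 := by
  intro s μ1 X01 X11 X02 X12 c1
  have hs0 : (Real.sqrt 2 : ℝ) ≠ 0 := by positivity
  have hs : s ≠ 0 := by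
    simp [s, Complex.ofReal_ne_zero, hs0]
  have h1 : (1 + Complex.I) / s ≠ (-1 - Complex.I) / s := by
    intro h
    rw [div_eq_div_iff hs hs] at h
    have := mul_right_cancel₀ hs h
    have h2 := congrArg Complex.re this
    norm_num at h2
  have h2 : (1 - Complex.I) / s ≠ (-1 + Complex.I) / s := by
    intro h
    rw [div_eq_div_iff hs hs] at h
    have := mul_right_cancel₀ hs h
    have h2 := congrArg Complex.re this
    norm_num at h2
  have h3 : (1 + Complex.I) / s ≠ (-1 + Complex.I) / s := by
    intro h
    rw [div_eq_div_iff hs hs] at h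
    have := mul_right_cancel₀ hs h
    have h2 := congrArg Complex.re this
    norm_num at h2
  have h4 : (1 - Complex.I) / s ≠ (-1 - Complex.I) / s := by
    intro h
    rw [div_eq_div_iff hs hs] at h
    have := mul_right_cancel₀ hs h
    have h2 := congrArg Complex.re this
    norm_num at h2
  have m1 : μ1 X01 = 0 := by
    simp only [μ1, X01, Finset.sum_pair h1, Finset.card_pair h1]
    ring_nf
  have m2 : μ1 X11 = 0 := by
    simp only [μ1, X11, Finset.sum_pair h2, Finset.card_pair h2]
    ring_nf
  have m3 : μ1 X02 = Complex.I / s := by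
    simp only [μ1, X02, Finset.sum_pair h3, Finset.card_pair h3]
    field_simp
    ring
  have m4 : μ1 X12 = -Complex.I / s := by
    simp only [μ1, X12, Finset.sum_pair h4, Finset.card_pair h4]
    field_simp
    ring
  have habs : ‖s‖ = Real.sqrt 2 := by
    simp [s, Complex.norm_real, Real.sqrt_nonneg]
  have hq : ‖Complex.I / s‖ ^ 2 = 1 / 2 := by
    rw [norm_div, habs]
    simp [div_pow, Real.sq_sqrt]
  have hc1 : c1 = 1 / 2 := by
    simp only [c1, m1, m2, m3, m4]
    rw [show (-Complex.I / s) = -(Complex.I / s) by ring, norm_neg, hq]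
    norm_num
  refine ⟨hc1, ?_⟩
  rw [hc1]
  ring
end
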